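/- With g_{ij}(x) = (e^{2σ(x)}/2)(1 − δ_{ij}), g^{im}(x) = (2e^{−2σ(x)}/3)(1 − 3δ^{im}), and σ_i = ∂σ/∂x^i, the Christoffel-type symbols L^i_{jk} = (g^{im}/2)(∂g_{jm}/∂x^k + ∂g_{km}/∂x^j − ∂g_{jk}/∂x^m) are equal to δ^i_j σ_k + δ^i_k σ_j + (1 − δ_{jk}) σ_i − ((1 − δ_{jk})/3)(σ_1 + σ_2 + σ_3 + σ_4), where summation over m from 1 to 4 is understood. -/

import Mathlib

/-- Partial derivative in the `i`-th coordinate direction. -/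
noncomputable def pd (f : (Fin 4 → ℝ) → ℝ) (x : Fin 4 → ℝ) (i : Fin 4) : ℝ :=
  fderiv ℝ f x (Pi.single i 1)

/-- Kronecker delta. -/
noncomputable def kd (i j : Fin 4) : ℝ := if i = j then 1 else 0

/-- The JCM metric coefficients `g_{ij}(x) = (e^{2σ(x)}/2)(1-δ_{ij})`. -/
noncomputable def gmet (σ : (Fin 4 → ℝ) → ℝ) (i j : Fin 4) (x : Fin 4 → ℝ) : ℝ :=
  Real.exp (2 * σ x) / 2 * (1 - kd i j)

/-- The inverse metric `g^{ij}(x) = (2e^{-2σ(x)}/3)(1-3δ^{ij})`. -/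
noncomputable def ginv (σ : (Fin 4 → ℝ) → ℝ) (i j : Fin 4) (x : Fin 4 → ℝ) : ℝ :=
  2 * Real.exp (-(2 * σ x)) / 3 * (1 - 3 * kd i j)


lemma pd_gmet (σ : (Fin 4 → ℝ) → ℝ) (hσ : ContDiff ℝ (⊤ : ℕ∞) σ) (x : Fin 4 → ℝ)
    (a b c : Fin 4) :
    pd (gmet σ a b) x c = Real.exp (2 * σ x) * (1 - kd a b) * pd σ x c := by
  have hd : DifferentiableAt ℝ σ x := (hσ.differentiable (by simp)).differentiableAt
  have h1 : HasFDerivAt (fun y => 2 * σ y) ((2:ℝ) • fderiv ℝ σ x) x :=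
    hd.hasFDerivAt.const_mul 2
  have h2 := h1.exp.mul_const ((1 - kd a b) / 2)
  have hfun : gmet σ a b = fun y => Real.exp (2 * σ y) * ((1 - kd a b) / 2) := by
    funext y; simp [gmet]; ring
  rw [pd, hfun, h2.fderiv]
  simp [pd]
  ring

set_option maxHeartbeats 1000000 in
theorem stmt12 (σ : (Fin 4 → ℝ) → ℝ) (hσ : ContDiff ℝ (⊤ : ℕ∞) σ) (x : Fin 4 → ℝ)
    (i j k : Fin 4) :
    ∑ m : Fin 4, ginv σ i m x / 2 *
        (pd (gmet σ j m) x k + pd (gmet σ k m) x j - pd (gmet σ j k) x m)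
      = kd i j * pd σ x k + kd i k * pd σ x j + (1 - kd j k) * pd σ x i
          - ((1 - kd j k) / 3) * ∑ m : Fin 4, pd σ x m := by
  have he0 : Real.exp (2 * σ x) ≠ 0 := Real.exp_ne_zero _
  have key : ∀ m : Fin 4, ginv σ i m x / 2 *
      (pd (gmet σ j m) x k + pd (gmet σ k m) x j - pd (gmet σ j k) x m)
      = (1 - 3 * kd i m) / 3 *
        ((1 - kd j m) * pd σ x k + (1 - kd k m) * pd σ x j
          - (1 - kd j k) * pd σ x m) := by
    intro m
    rw [pd_gmet σ hσ x, pd_gmet σ hσ x, pd_gmet σ hσ x]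
    unfold ginv
    rw [Real.exp_neg]
    field_simp
  rw [Finset.sum_congr rfl fun m _ => key m]
  simp only [Fin.sum_univ_four]
  fin_cases i <;> fin_cases j <;> fin_cases k <;> · simp [kd]; ring_nf
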